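/- Let 0 ≤ f < n and consider any execution of Algorithm B with at most f crashed players in which at least one player has input 1. If there is a round r ≤ f+1 such that |P_r| ≥ f+1, then every player that decides, decides on 1 (in particular every non-faulty player decides 1). -/
import Mathlib


open Finset

/-- An adversary crashing at most `f` of the `n` players: each crashed player
gets a crash round (`≥ 1`) and, for its crash round, a choice of which of its
messages are delivered. -/
structure Adversary (n f : ℕ) where
  crashRound : Fin n → Option ℕ
  delivered : Fin n → Fin n → Prop
  card_crash_le : (Finset.univ.filter fun p => (crashRound p).isSome).card ≤ f
  one_le_crash : ∀ p r, crashRound p = some r → 1 ≤ r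

namespace Adversary
variable {n f : ℕ}

/-- `p` is alive in round `r`: it does not crash in any round `< r`. -/
def Alive (A : Adversary n f) (p : Fin n) (r : ℕ) : Prop :=
  ∀ r', A.crashRound p = some r' → r ≤ r'

/-- `p` never crashes. -/
def NonFaulty (A : Adversary n f) (p : Fin n) : Prop := A.crashRound p = none

/-- A message that `p` is prescribed to send to `q` in round `r` actually
arrives (provided `q` is awake): `p` must be alive in round `r`, and if `r` is
`p`'s crash round, the adversary must have chosen to deliver this message. -/
def Arrives (A : Adversary n f) (p q : Fin n) (r : ℕ) : Prop :=
  A.Alive p r ∧ (A.crashRound p = some r → A.delivered p q)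

end Adversary

/-- Committee `C d` of the `JoinCommittees a b` assignment on `n` players:
player `i % n` joins committee `C ⌈i/b⌉` for each `1 ≤ i ≤ a * b`, so that
`C d = {i % n : (d-1)*b < i ≤ d*b, i ≤ a*b}`. -/
def committee (n : ℕ) (hn : 0 < n) (a b d : ℕ) : Finset (Fin n) :=
  ((Finset.Ioc ((d - 1) * b) (d * b)).filter fun i => i ≤ a * b).image
    fun i => ⟨i % n, Nat.mod_lt i hn⟩

/-- `⌈√n⌉`, the size of the committees of Algorithm B. -/
noncomputable def sqrtCeil (n : ℕ) : ℕ := ⌈Real.sqrt n⌉₊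

/-- `τ = ⌈(f+1)/√n⌉`, the number of rounds an activated player of Algorithm B
stays awake forwarding the bit `1`. -/
noncomputable def tauB (n f : ℕ) : ℕ := ⌈((f : ℝ) + 1) / Real.sqrt n⌉₊

variable {n : ℕ}

/-- The committees `C 1, …, C f` of Algorithm B, of size `⌈√n⌉`. -/
noncomputable def committeeB (hn : 0 < n) (f d : ℕ) : Finset (Fin n) :=
  committee n hn f (sqrtCeil n) d

/-- Given the state `st` at the start of round `r` (`st q = (Y, T)` of player
`q`), player `q` is prescribed by Algorithm B to send the bit `1` to player
`p` in round `r`. -/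
noncomputable def SendsOneB (hn : 0 < n) (f : ℕ) (X : Fin n → Bool)
    (st : Fin n → Bool × ℕ) (q p : Fin n) (r : ℕ) : Prop :=
  (r = 1 ∧ X q = true ∧ p ∈ committeeB hn f 1) ∨
  (2 ≤ r ∧ r ≤ f ∧ 0 < (st q).2 ∧ p ∈ committeeB hn f r) ∨
  (r = f + 1 ∧ ((st q).1 = true ∨ X q = true))

open scoped Classical in
/-- `execB hn f X A r p = (Y, T)`: the state of player `p` (its bit `Y` and
its counter `T`) at the end of round `r` of Algorithm B (equivalently, at the
start of round `r+1`); `r = 0` gives the initial state `(false, 0)`. -/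
noncomputable def execB (hn : 0 < n) (f : ℕ) (X : Fin n → Bool)
    (A : Adversary n f) : ℕ → Fin n → Bool × ℕ
  | 0 => fun _ => (false, 0)
  | r + 1 => fun p =>
      if A.Alive p (r + 1) then
        let st := execB hn f X A r
        let rcv : Prop :=
          ∃ q, SendsOneB hn f X st q p (r + 1) ∧ A.Arrives q p (r + 1)
        (if (st p).1 = true ∨ rcv ∨ (r + 1 = f + 1 ∧ X p = true) then true
          else false,
         if rcv ∧ (st p).1 = false then tauB n f
         else if r + 1 = 1 ∧ X p = true then tauB n f
         else if 2 ≤ r + 1 ∧ r + 1 ≤ f then (st p).2 - 1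
         else (st p).2)
      else execB hn f X A r p

/-- Player `p` decides (at the end of round `f+1`) on the bit `v`:
`p` survives all of rounds `1, …, f+1` and its bit `Y` equals `v` then. -/
def DecidesB (hn : 0 < n) (f : ℕ) (X : Fin n → Bool) (A : Adversary n f)
    (p : Fin n) (v : Bool) : Prop :=
  A.Alive p (f + 2) ∧ (execB hn f X A (f + 1) p).1 = v

open scoped Classical in
/-- The set of players that receive a `1`-valued message in round `r` of
Algorithm B. -/
noncomputable def recvOneB (hn : 0 < n) (f : ℕ) (X : Fin n → Bool)
    (A : Adversary n f) (r : ℕ) : Finset (Fin n) :=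
  Finset.univ.filter fun p => A.Alive p r ∧
    ∃ q, SendsOneB hn f X (execB hn f X A (r - 1)) q p r ∧ A.Arrives q p r

open scoped Classical in
/-- The sets `P r`: `P 1 = {p₁}` where `p₁` is the largest-index player with
input `1`, and `P (r+1) = P r ∪ {players receiving a 1-valued message in round r}`. -/
noncomputable def PsetB (hn : 0 < n) (f : ℕ) (X : Fin n → Bool)
    (A : Adversary n f) (p₁ : Fin n) : ℕ → Finset (Fin n)
  | 0 => ∅
  | r + 1 =>
      if r = 0 then {p₁}
      else PsetB hn f X A p₁ r ∪ recvOneB hn f X A r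

/-- The rounds in which player `p` is prescribed to be awake in Algorithm B:
rounds `1` and `f+1`, the awake round of each committee `p` belongs to, and
every round of `[2, f]` at whose start `p`'s counter `T` is positive. -/
noncomputable def AwakeB (hn : 0 < n) (f : ℕ) (X : Fin n → Bool)
    (A : Adversary n f) (p : Fin n) (r : ℕ) : Prop :=
  r = 1 ∨ r = f + 1 ∨
    (2 ≤ r ∧ r ≤ f ∧
      (p ∈ committeeB hn f r ∨ 0 < (execB hn f X A (r - 1) p).2))

open scoped Classical in
/-- The number of rounds in which player `p` is awake in an execution of
Algorithm B. -/
noncomputable def awakeCountB (hn : 0 < n) (f : ℕ) (X : Fin n → Bool)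
    (A : Adversary n f) (p : Fin n) : ℕ :=
  ((Finset.Icc 1 (f + 1)).filter fun r => AwakeB hn f X A p r).card

open scoped Classical in
/-- The total number of messages sent in an execution of Algorithm B:
a message is sent for every round `r ∈ [1, f+1]` and every pair `(q, p)` such
that `q` is alive in round `r` and prescribed to send the bit `1` to `p`. -/
noncomputable def msgCountB (hn : 0 < n) (f : ℕ) (X : Fin n → Bool)
    (A : Adversary n f) : ℕ :=
  ∑ r ∈ Finset.Icc 1 (f + 1),
    (Finset.univ.filter fun qp : Fin n × Fin n =>
      A.Alive qp.1 r ∧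
        SendsOneB hn f X (execB hn f X A (r - 1)) qp.1 qp.2 r).card

open scoped Classical in
lemma execB_Y_mono (hn : 0 < n) (f : ℕ) (X : Fin n → Bool) (A : Adversary n f)
    (p : Fin n) : ∀ s t, s ≤ t → (execB hn f X A s p).1 = true →
    (execB hn f X A t p).1 = true := by
  intro s t hst h
  induction t with
  | zero =>
    have : s = 0 := Nat.le_zero.mp hst
    subst this; exact h
  | succ t ih =>
    rcases Nat.lt_or_ge s (t + 1) with hlt | hge
    · have hY : (execB hn f X A t p).1 = true := ih (Nat.lt_succ_iff.mp hlt)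
      by_cases hA : A.Alive p (t + 1)
      · simp only [execB, if_pos hA]
        rw [if_pos (Or.inl hY)]
      · simp only [execB, if_neg hA]
        exact hY
    · have : s = t + 1 := le_antisymm hst hge
      subst this; exact h

open scoped Classical in
lemma recvOneB_Y (hn : 0 < n) (f : ℕ) (X : Fin n → Bool) (A : Adversary n f)
    (t : ℕ) (ht : 1 ≤ t) (p : Fin n) (hp : p ∈ recvOneB hn f X A t) :
    (execB hn f X A t p).1 = true := by
  rw [recvOneB, Finset.mem_filter] at hp
  obtain ⟨-, hAlive, hrcv⟩ := hp
  obtain ⟨t', rfl⟩ : ∃ t', t = t' + 1 := ⟨t - 1, by omega⟩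
  rw [Nat.add_sub_cancel] at hrcv
  simp only [execB, if_pos hAlive]
  rw [if_pos (Or.inr (Or.inl hrcv))]

open scoped Classical in
lemma PsetB_Y (hn : 0 < n) (f : ℕ) (X : Fin n → Bool) (A : Adversary n f)
    (p₁ : Fin n) (hp₁ : X p₁ = true) :
    ∀ t, t ≤ f + 1 → ∀ p ∈ PsetB hn f X A p₁ t,
      (execB hn f X A f p).1 = true ∨ X p = true := by
  intro t
  induction t with
  | zero => simp [PsetB]
  | succ t ih =>
    intro ht p hp
    rw [PsetB] at hp
    split_ifs at hp with h0
    · right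
      rw [Finset.mem_singleton] at hp
      subst hp; exact hp₁
    · rcases Finset.mem_union.mp hp with h | h
      · exact ih (by omega) p h
      · left
        exact execB_Y_mono hn f X A p t f (by omega)
          (recvOneB_Y hn f X A t (by omega) p h)

/-- Lemma `many_ones`.  Let `0 ≤ f < n` and consider any
execution of Algorithm B with at most `f` crashes in which at least one player
has input `1`, and let `p₁` be the largest-index player with input `1`.  If
there is a round `r ≤ f+1` with `|P r| ≥ f+1`, then every player that decides,
decides on `1`; in particular every non-faulty player decides `1`. -/
theorem algorithmB_many_ones (n f : ℕ) (hn : 0 < n) (hf : f < n)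
    (X : Fin n → Bool) (A : Adversary n f) (p₁ : Fin n)
    (hp₁ : X p₁ = true) (hp₁_max : ∀ q, X q = true → q ≤ p₁)
    (r : ℕ) (hr1 : 1 ≤ r) (hrf : r ≤ f + 1)
    (hcard : f + 1 ≤ (PsetB hn f X A p₁ r).card) :
    (∀ p v, DecidesB hn f X A p v → v = true) ∧
    (∀ p, A.NonFaulty p → DecidesB hn f X A p true) := by
  classical
  -- find a non-faulty player in `P r`
  have hns : ¬ (PsetB hn f X A p₁ r ⊆
      Finset.univ.filter fun p => (A.crashRound p).isSome) := by
    intro hsub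
    have := Finset.card_le_card hsub
    have := A.card_crash_le
    omega
  obtain ⟨p, hpP, hpc⟩ := Finset.not_subset.mp hns
  have hNF : A.crashRound p = none := by
    by_contra h
    exact hpc (Finset.mem_filter.mpr ⟨Finset.mem_univ _,
      Option.isSome_iff_ne_none.mpr h⟩)
  have hPY : (execB hn f X A f p).1 = true ∨ X p = true :=
    PsetB_Y hn f X A p₁ hp₁ r hrf p hpP
  -- in round f+1, p sends 1 to everyone and the message arrives
  have key : ∀ q, A.Alive q (f + 1) → (execB hn f X A (f + 1) q).1 = true := by
    intro q hq
    have hrcv : ∃ q', SendsOneB hn f X (execB hn f X A f) q' q (f + 1) ∧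
        A.Arrives q' q (f + 1) := by
      refine ⟨p, Or.inr (Or.inr ⟨rfl, hPY⟩), ?_, ?_⟩
      · intro r' hr'; rw [hNF] at hr'; exact absurd hr' (by simp)
      · intro hr'; rw [hNF] at hr'; exact absurd hr' (by simp)
    simp only [execB, if_pos hq]
    rw [if_pos (Or.inr (Or.inl hrcv))]
  constructor
  · rintro q v ⟨hAlive, hY⟩
    have hq1 : A.Alive q (f + 1) := fun r' h => by
      have := hAlive r' h; omega
    rw [← hY]
    exact key q hq1
  · intro q hq
    have hAlive : ∀ m, A.Alive q m := by
      intro m r' hr'; rw [hq] at hr'; exact absurd hr' (by simp)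
    exact ⟨hAlive _, key q (hAlive _)⟩
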